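/- arXiv:2012.00554 — 4 statements merged into one kernel-verified Lean document; each statement's English description precedes it below -/
import Mathlib

section
/- Let $\Omega = \begin{pmatrix} A & \omega \\ \omega^\dagger & B \end{pmatrix}$ be a positive semidefinite Hermitian block matrix with $\mathrm{Tr}(\Omega) = 2R$, where $\omega \in \mathbb{C}^{m \times n}$. Then the trace norm of the off-diagonal block satisfies $\|\omega\|_1 \le R$, and $\operatorname{rank}(\omega) \le \operatorname{rank}(\Omega)$. -/
/-!
Let `H = √(ωωᴴ)` and `C = (ωωᴴ)^{-1/2} ω`, with the inverse taken on the support, so that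
`ωCᴴ = Cωᴴ = H` and `CᴴC` is an orthogonal projection. Compressing `Ω` by the block row `(1, -C)`
gives the positive semidefinite matrix `A - ωCᴴ - Cωᴴ + CBCᴴ`, whose trace is
`tr A - 2 tr H + tr (B CᴴC) ≤ tr A + tr B - 2 tr H`; hence `2 ‖ω‖₁ ≤ tr Ω = 2R`.
The rank bound holds because `ω` is a submatrix of `Ω`.
-/

open Matrix ComplexOrder

/-- The positive semidefinite square root of a positive semidefinite matrix. -/
noncomputable def Matrix.PosSemidef.sqrt {n : Type*} [Fintype n] [DecidableEq n] {A : Matrix n n ℂ}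
    (hA : A.PosSemidef) : Matrix n n ℂ :=
  hA.1.eigenvectorUnitary.1 * diagonal ((↑) ∘ (√·) ∘ hA.1.eigenvalues) *
  (star hA.1.eigenvectorUnitary : Matrix n n ℂ)

noncomputable def traceNorm (m n : ℕ) (ω : Matrix (Fin m) (Fin n) ℂ) : ℝ :=
  ((posSemidef_self_mul_conjTranspose ω).sqrt.trace).re

namespace Matrix

theorem PosSemidef.sqrt_eq_cfc {n : Type*} [Fintype n] [DecidableEq n] {A : Matrix n n ℂ}
    (hA : A.PosSemidef) : hA.sqrt = cfc Real.sqrt A := by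
  rw [hA.1.cfc_eq, IsHermitian.cfc, Unitary.conjStarAlgAut_apply]
  rfl

theorem trace_fromBlocks {l m α : Type*} [Fintype l] [Fintype m] [AddCommMonoid α]
    (A : Matrix l l α) (B : Matrix l m α) (C : Matrix m l α) (D : Matrix m m α) :
    (fromBlocks A B C D).trace = A.trace + D.trace := by
  simp [trace, Fintype.sum_sum_type]

variable {l m R : Type*}

theorem PosSemidef.of_fromBlocks₂₂ [Ring R] [PartialOrder R] [StarRing R] {A : Matrix l l R}
    {B : Matrix m m R} {X : Matrix l m R} {Y : Matrix m l R}
    (h : (fromBlocks A X Y B).PosSemidef) : B.PosSemidef :=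
  h.submatrix Sum.inr

variable [Fintype l] [Fintype m]

theorem PosSemidef.sub_sub_add_of_fromBlocks [Ring R] [PartialOrder R] [StarRing R] [DecidableEq l]
    {A : Matrix l l R} {B : Matrix m m R} {X : Matrix l m R}
    (h : (fromBlocks A X Xᴴ B).PosSemidef) (C : Matrix l m R) :
    (A - X * Cᴴ - C * Xᴴ + C * B * Cᴴ).PosSemidef := by
  have hY := h.mul_mul_conjTranspose_same (fromCols 1 (-C))
  rw [conjTranspose_fromCols_eq_fromRows_conjTranspose, fromCols_mul_fromBlocks,
    fromCols_mul_fromRows] at hY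
  convert hY using 1
  simp only [sub_eq_add_neg, Matrix.one_mul, Matrix.neg_mul, conjTranspose_one, Matrix.mul_one,
    conjTranspose_neg, Matrix.mul_neg, Matrix.add_mul, neg_add_rev, neg_neg]
  abel

theorem trace_mul_mul_conjTranspose_le [DecidableEq m] [CommRing R] [PartialOrder R] [StarRing R]
    [IsOrderedAddMonoid R] {B : Matrix m m R} (hB : B.PosSemidef) {C : Matrix l m R}
    (hC : IsIdempotentElem (Cᴴ * C)) : (C * B * Cᴴ).trace ≤ B.trace := by
  set Q := 1 - Cᴴ * C
  have hQ : Qᴴ * Q = Q := by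
    simp only [Q, conjTranspose_sub, conjTranspose_one, conjTranspose_mul,
      conjTranspose_conjTranspose, Matrix.sub_mul, Matrix.mul_sub, Matrix.one_mul, Matrix.mul_one,
      hC.eq]
    abel
  have htrace : (Q * B * Qᴴ).trace = B.trace - (C * B * Cᴴ).trace := by
    rw [trace_mul_cycle, hQ, Matrix.sub_mul, Matrix.one_mul, trace_sub, trace_mul_cycle C]
  exact sub_nonneg.mp (htrace ▸ (hB.mul_mul_conjTranspose_same Q).trace_nonneg)

section RCLike

variable {𝕜 : Type*} [RCLike 𝕜] [DecidableEq l]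

theorem exists_mul_conjTranspose_eq_cfc_sqrt (X : Matrix l m 𝕜) :
    ∃ C : Matrix l m 𝕜, X * Cᴴ = cfc Real.sqrt (X * Xᴴ) ∧ IsIdempotentElem (Cᴴ * C) := by
  set S := X * Xᴴ
  have hS : IsSelfAdjoint S := isHermitian_mul_conjTranspose_self X
  have hcont (f : ℝ → ℝ) : ContinuousOn f (spectrum ℝ S) := finite_real_spectrum.continuousOn f
  -- As `√x = 0` for `x ≤ 0` and `0⁻¹ = 0`, the scalar identities below hold for every real `x`.
  set K := cfc (fun x : ℝ ↦ (√x)⁻¹) S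
  have hK : Kᴴ = K := IsSelfAdjoint.cfc
  refine ⟨K * X, ?_, ?_⟩
  · have : ∀ x : ℝ, x * (√x)⁻¹ = √x := fun x ↦ by rw [← div_eq_mul_inv, Real.div_sqrt]
    rw [conjTranspose_mul, hK, ← Matrix.mul_assoc]
    change S * K = _
    conv_lhs => rw [← cfc_id' ℝ S, ← cfc_mul _ _ S (hcont _) (hcont _)]
    simp only [this]
  · have : ∀ x : ℝ, (√x)⁻¹ * (x * ((√x)⁻¹ * (√x)⁻¹)) = (√x)⁻¹ := fun x ↦ by
      rw [← mul_assoc x, ← div_eq_mul_inv x, Real.div_sqrt, ← mul_assoc]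
      simpa only [inv_inv] using mul_inv_mul_cancel (√x)⁻¹
    have hKSK : K * (S * (K * K)) = K := by
      conv_lhs => rw [← cfc_id' ℝ S, ← cfc_mul _ _ S (hcont _) (hcont _),
        ← cfc_mul _ _ S (hcont _) (hcont _), ← cfc_mul _ _ S (hcont _) (hcont _)]
      simp only [this]
      rfl
    rw [IsIdempotentElem, conjTranspose_mul, hK]
    have hKX : K * (X * (Xᴴ * (K * (K * X)))) = K * X := by
      conv_rhs => rw [← hKSK]
      simp only [S, Matrix.mul_assoc]
    simp only [Matrix.mul_assoc, hKX]

theorem PosSemidef.two_mul_trace_cfc_sqrt_le [DecidableEq m] {A : Matrix l l 𝕜}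
    {B : Matrix m m 𝕜} {X : Matrix l m 𝕜} (h : (fromBlocks A X Xᴴ B).PosSemidef) :
    2 * (cfc Real.sqrt (X * Xᴴ)).trace ≤ A.trace + B.trace := by
  obtain ⟨C, hXC, hC⟩ := exists_mul_conjTranspose_eq_cfc_sqrt X
  have hCX : C * Xᴴ = cfc Real.sqrt (X * Xᴴ) := by
    rw [← conjTranspose_conjTranspose C, ← conjTranspose_mul, hXC]
    exact IsSelfAdjoint.cfc
  have hcompress := (h.sub_sub_add_of_fromBlocks C).trace_nonneg
  rw [trace_add, trace_sub, trace_sub, hXC, hCX] at hcompress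
  calc 2 * (cfc Real.sqrt (X * Xᴴ)).trace ≤ A.trace + (C * B * Cᴴ).trace := by
        rw [← sub_nonneg]; convert hcompress using 1; ring
    _ ≤ A.trace + B.trace :=
        add_le_add_right (trace_mul_mul_conjTranspose_le h.of_fromBlocks₂₂ hC) _

end RCLike

end Matrix

/-- If a PSD block matrix `Ω = [[A, ω],[ωᴴ, B]]` has trace `2R`, then the off-diagonal
block satisfies `‖ω‖₁ ≤ R` and `rank ω ≤ rank Ω`. -/
theorem stmt_5 (m n : ℕ) (R : ℝ)
    (A : Matrix (Fin m) (Fin m) ℂ) (B : Matrix (Fin n) (Fin n) ℂ)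
    (ω : Matrix (Fin m) (Fin n) ℂ)
    (hpsd : (fromBlocks A ω ωᴴ B).PosSemidef)
    (htr : (fromBlocks A ω ωᴴ B).trace = (2 * R : ℝ)) :
    traceNorm m n ω ≤ R ∧ ω.rank ≤ (fromBlocks A ω ωᴴ B).rank := by
  refine ⟨?_, (fromBlocks A ω ωᴴ B).rank_submatrix_le Sum.inl Sum.inr⟩
  have h := hpsd.two_mul_trace_cfc_sqrt_le
  rw [← trace_fromBlocks A ω ωᴴ B, htr,
    ← (posSemidef_self_mul_conjTranspose ω).sqrt_eq_cfc] at h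
  have hre := (Complex.le_def.mp h).1
  simp only [Complex.mul_re, Complex.re_ofNat, Complex.im_ofNat, zero_mul, sub_zero,
    Complex.ofReal_re, Nat.ofNat_pos, mul_le_mul_iff_right₀] at hre
  exact hre
end

section
/- Let $\mu$ be a Borel probability measure on the set $\Omega(d)$ of rank-one projections on $\mathbb{C}^d$ and let $f : \Omega(d) \to \mathbb{R}$ be continuous. If $\int f(P)\, P^{\otimes n}\, d\mu(P) \ge 0$ (positive semidefinite) for all $n \in \mathbb{N}$, then $f \ge 0$ holds $\mu$-almost everywhere. -/
/-!
Fix a point `Q = |ψ⟩⟨ψ|` of `Ω(d)`. Testing the positive semidefinite matrix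
`∫ f(P) P^{⊗n} dμ(P)` against `ψ^{⊗n}` gives `∫ f(P) ⟨ψ, P ψ⟩ⁿ dμ(P) ≥ 0`. The overlap
`⟨ψ, P ψ⟩ = |⟨ψ, φ⟩|²` of `P = |φ⟩⟨φ|` with `Q` lies in `[0, 1]` and equals `1` only at `P = Q`,
because `‖P - Q‖₂² = 2 - 2 ⟨ψ, P ψ⟩` in the Hilbert–Schmidt norm. So its powers concentrate at `Q`:
if `Q` lies in the support of `μ` and `f(Q) < 0`, the integrals become negative for large `n`.
Hence `f ≥ 0` on the support of `μ`, which is conull.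
-/

open Matrix MeasureTheory ComplexOrder

/-- The set of rank-one projections `|φ⟩⟨φ|` (with `φ` a unit vector) on `ℂ^d`. -/
def OmegaSet (d : ℕ) : Set (Matrix (Fin d) (Fin d) ℂ) :=
  {P | ∃ φ : Fin d → ℂ, (∑ i, Complex.normSq (φ i)) = 1 ∧ P = vecMulVec φ (star φ)}

/--  carries its Borel σ-algebra. -/
noncomputable instance (d : ℕ) : MeasurableSpace ↥(OmegaSet d) := borel _

open Filter Topology

theorem Continuous.integrable_of_compactSpace {X E : Type*} [TopologicalSpace X] [CompactSpace X]
    [MeasurableSpace X] [OpensMeasurableSpace X] {μ : Measure X} [IsFiniteMeasure μ]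
    [NormedAddCommGroup E] {g : X → E} (hg : Continuous g) : Integrable g μ :=
  hg.integrable_of_hasCompactSupport (.of_compactSpace g)

theorem nonpos_of_forall_mul_pow_le_mul_pow {a b r s : ℝ} (hr : 0 ≤ r) (hrs : r < s)
    (h : ∀ n : ℕ, a * s ^ n ≤ b * r ^ n) : a ≤ 0 := by
  have hs : 0 < s := hr.trans_lt hrs
  have hlim : Tendsto (fun n : ℕ => b * (r / s) ^ n) atTop (𝓝 0) := by
    simpa using (tendsto_pow_atTop_nhds_zero_of_lt_one (div_nonneg hr hs.le)
      ((div_lt_one hs).2 hrs)).const_mul b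
  refine ge_of_tendsto hlim (Eventually.of_forall fun n => ?_)
  rw [div_pow, ← mul_div_assoc, le_div_iff₀ (pow_pos hs n)]
  exact h n

section PeakFunction

variable {X : Type*} [TopologicalSpace X] [CompactSpace X]

theorem exists_lt_one_forall_notMem_le {T : X → ℝ} (hT : Continuous T) {x₀ : X}
    (hT_lt : ∀ x ≠ x₀, T x < 1) {V : Set X} (hV : IsOpen V) (hx₀ : x₀ ∈ V) :
    ∃ r < 1, 0 ≤ r ∧ ∀ x ∉ V, T x ≤ r := by
  obtain ⟨ε, hε, hgap⟩ : ∃ ε > 0, ∀ x ∈ Vᶜ, ε ≤ 1 - T x :=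
    hV.isClosed_compl.isCompact.exists_forall_le' (continuous_const.sub hT).continuousOn
      fun x hx => sub_pos.2 (hT_lt x (ne_of_mem_of_not_mem hx (by simpa using hx₀)))
  exact ⟨max (1 - ε) 0, max_lt (sub_lt_self 1 hε) one_pos, le_max_right _ _, fun x hx =>
    (le_sub_comm.1 (hgap x hx)).trans (le_max_left _ _)⟩

theorem nonneg_of_forall_integral_mul_pow_nonneg [MeasurableSpace X] [OpensMeasurableSpace X]
    {μ : Measure X} [IsFiniteMeasure μ] (f : C(X, ℝ)) {T : X → ℝ} (hT : Continuous T)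
    (hT_nonneg : ∀ x, 0 ≤ T x) {x₀ : X} (hT_peak : T x₀ = 1) (hT_lt : ∀ x ≠ x₀, T x < 1)
    (hx₀ : x₀ ∈ μ.support) (h : ∀ n : ℕ, 0 ≤ ∫ x, f x * T x ^ n ∂μ) : 0 ≤ f x₀ := by
  by_contra! hneg
  obtain ⟨δ, hδ, hfδ⟩ : ∃ δ > 0, f x₀ < -δ := ⟨-f x₀ / 2, by linarith, by linarith⟩
  obtain ⟨r, hr1, hr, hTr⟩ := exists_lt_one_forall_notMem_le hT hT_lt
    (isOpen_lt f.continuous continuous_const) hfδ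
  obtain ⟨s, hrs, hs1⟩ := exists_between hr1
  set U := {x | s < T x}
  have hU : IsOpen U := isOpen_lt continuous_const hT
  have hμU : 0 < μ.real U :=
    ENNReal.toReal_pos ((Measure.mem_support_iff_forall x₀).1 hx₀ U
      (hU.mem_nhds (by simp [U, hT_peak, hs1]))).ne' (measure_ne_top μ U)
  have hbound (n : ℕ) (x : X) :
      f x * T x ^ n ≤ ‖f‖ * r ^ n - U.indicator (fun _ => δ * s ^ n) x := by
    have hTn : 0 ≤ T x ^ n := pow_nonneg (hT_nonneg x) n
    have hfr : 0 ≤ ‖f‖ * r ^ n := by positivity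
    by_cases hxU : x ∈ U
    · have hfx : f x < -δ := by
        by_contra hxV
        exact (hrs.trans hxU).not_ge (hTr x hxV)
      have hsT : s ^ n ≤ T x ^ n := pow_le_pow_left₀ (hr.trans hrs.le) hxU.le n
      rw [Set.indicator_of_mem hxU]
      nlinarith
    · rw [Set.indicator_of_notMem hxU, sub_zero]
      rcases le_or_gt (f x) 0 with hfx | hfx
      · nlinarith
      · have hTrn : T x ^ n ≤ r ^ n :=
          pow_le_pow_left₀ (hT_nonneg x) (hTr x (not_lt.2 (show -δ ≤ f x by linarith))) n
        calc f x * T x ^ n ≤ ‖f‖ * T x ^ n :=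
              mul_le_mul_of_nonneg_right ((le_abs_self _).trans (f.norm_coe_le_norm x)) hTn
          _ ≤ ‖f‖ * r ^ n := mul_le_mul_of_nonneg_left hTrn (norm_nonneg f)
  have hmoment (n : ℕ) : δ * μ.real U * s ^ n ≤ ‖f‖ * μ.real Set.univ * r ^ n := by
    have hU_int := (integrable_const (δ * s ^ n)).indicator (μ := μ) hU.measurableSet
    have := (h n).trans (integral_mono (f.continuous.mul (hT.pow n)).integrable_of_compactSpace
      ((integrable_const _).sub hU_int) (hbound n) :
        _ ≤ ∫ x, (‖f‖ * r ^ n - U.indicator (fun _ => δ * s ^ n) x) ∂μ)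
    rw [integral_sub (integrable_const _) hU_int, integral_const,
      integral_indicator_const _ hU.measurableSet, smul_eq_mul, smul_eq_mul] at this
    linarith
  exact (mul_pos hδ hμU).not_ge (nonpos_of_forall_mul_pow_le_mul_pow hr hrs hmoment)

end PeakFunction

theorem star_prod_dotProduct_mulVec_prod {ι R : Type*} [Fintype ι] [CommSemiring R] [StarRing R]
    (A : Matrix ι ι R) (v : ι → R) (n : ℕ) :
    star (fun F : Fin n → ι => ∏ i, v (F i)) ⬝ᵥ
        (of fun F G : Fin n → ι => ∏ i, A (F i) (G i)) *ᵥ (fun G => ∏ i, v (G i)) =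
      (star v ⬝ᵥ A *ᵥ v) ^ n := by
  simp only [dotProduct, mulVec, Fintype.sum_pow, Pi.star_apply, star_prod, of_apply,
    Finset.prod_mul_distrib, Fintype.prod_sum]

theorem star_dotProduct_integral_mulVec {X ι 𝕜 : Type*} [MeasurableSpace X] {μ : Measure X}
    [Fintype ι] [RCLike 𝕜] (g : X → ι → ι → 𝕜) (hg : ∀ i j, Integrable (fun x => g x i j) μ)
    (w : ι → 𝕜) :
    star w ⬝ᵥ (of fun i j => ∫ x, g x i j ∂μ) *ᵥ w = ∫ x, star w ⬝ᵥ of (g x) *ᵥ w ∂μ := by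
  have hrow (i : ι) : Integrable (fun x => ∑ j, g x i j * w j) μ :=
    integrable_finsetSum _ fun j _ => (hg i j).mul_const _
  simp only [dotProduct, mulVec, of_apply]
  rw [integral_finsetSum _ fun i _ => (hrow i).const_mul _]
  refine Finset.sum_congr rfl fun i _ => ?_
  rw [integral_const_mul, integral_finsetSum _ fun j _ => (hg i j).mul_const _]
  simp only [integral_mul_const]

theorem star_dotProduct_vecMulVec_mulVec {ι : Type*} [Fintype ι] (φ ψ : ι → ℂ) :
    star ψ ⬝ᵥ vecMulVec φ (star φ) *ᵥ ψ = Complex.normSq (star ψ ⬝ᵥ φ) := by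
  rw [vecMulVec_mulVec, dotProduct_smul, star_dotProduct, Complex.normSq_eq_conj_mul_self]
  simp [mul_comm]

theorem sum_normSq_vecMulVec_sub {ι : Type*} [Fintype ι] (φ ψ : ι → ℂ) :
    ((∑ j, ∑ k, Complex.normSq (vecMulVec φ (star φ) j k - vecMulVec ψ (star ψ) j k) : ℝ) : ℂ) =
      (star φ ⬝ᵥ φ) ^ 2 + (star ψ ⬝ᵥ ψ) ^ 2 - 2 * ((star ψ ⬝ᵥ φ) * (star φ ⬝ᵥ ψ)) := by
  rw [show ∀ a b : ℂ, 2 * (a * b) = b * a + a * b from fun a b => by ring, ← sub_sub]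
  push_cast [Complex.normSq_eq_conj_mul_self]
  simp only [dotProduct, sq, Finset.sum_mul, Finset.mul_sum, ← Finset.sum_sub_distrib,
    ← Finset.sum_add_distrib, vecMulVec_apply, Pi.star_apply, RCLike.star_def, map_sub, map_mul,
    Complex.conj_conj]
  refine Finset.sum_congr rfl fun j _ => Finset.sum_congr rfl fun k _ => ?_
  ring

theorem star_dotProduct_self_eq_one {ι : Type*} [Fintype ι] {φ : ι → ℂ}
    (hφ : ∑ i, Complex.normSq (φ i) = 1) : star φ ⬝ᵥ φ = 1 := by
  simp only [dotProduct, Pi.star_apply, RCLike.star_def, ← Complex.normSq_eq_conj_mul_self]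
  exact_mod_cast hφ

section OmegaSet

instance (d : ℕ) : BorelSpace ↥(OmegaSet d) := ⟨rfl⟩

instance (d : ℕ) : SecondCountableTopology (Matrix (Fin d) (Fin d) ℂ) :=
  inferInstanceAs (SecondCountableTopology (Fin d → Fin d → ℂ))

theorem omegaSet_eq_image_sphere (d : ℕ) :
    OmegaSet d =
      (fun φ : EuclideanSpace ℂ (Fin d) => vecMulVec φ (star φ)) '' Metric.sphere 0 1 := by
  ext P
  simp only [OmegaSet, Set.mem_image, mem_sphere_zero_iff_norm, EuclideanSpace.norm_eq,
    Real.sqrt_eq_one, Complex.sq_norm]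
  constructor
  · rintro ⟨φ, hφ, rfl⟩
    exact ⟨WithLp.toLp 2 φ, hφ, rfl⟩
  · rintro ⟨φ, hφ, rfl⟩
    exact ⟨φ, hφ, rfl⟩

instance (d : ℕ) : CompactSpace ↥(OmegaSet d) := by
  rw [← isCompact_iff_compactSpace, omegaSet_eq_image_sphere]
  exact (isCompact_sphere 0 1).image (by fun_prop)

variable {d : ℕ}

/-- `⟨ψ, P ψ⟩`, which is real because `P` is positive semidefinite (see `ofReal_overlap`). -/
noncomputable def overlap (ψ : Fin d → ℂ) (P : OmegaSet d) : ℝ :=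
  (star ψ ⬝ᵥ (P : Matrix (Fin d) (Fin d) ℂ) *ᵥ ψ).re

theorem overlap_eq_normSq {ψ φ : Fin d → ℂ} {P : OmegaSet d}
    (hP : (P : Matrix (Fin d) (Fin d) ℂ) = vecMulVec φ (star φ)) :
    overlap ψ P = Complex.normSq (star ψ ⬝ᵥ φ) := by
  rw [overlap, hP, star_dotProduct_vecMulVec_mulVec, Complex.ofReal_re]

theorem ofReal_overlap (ψ : Fin d → ℂ) (P : OmegaSet d) :
    (overlap ψ P : ℂ) = star ψ ⬝ᵥ (P : Matrix (Fin d) (Fin d) ℂ) *ᵥ ψ := by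
  obtain ⟨φ, -, hP⟩ := P.2
  rw [overlap_eq_normSq hP, hP, star_dotProduct_vecMulVec_mulVec]

theorem overlap_nonneg (ψ : Fin d → ℂ) (P : OmegaSet d) : 0 ≤ overlap ψ P := by
  obtain ⟨φ, -, hP⟩ := P.2
  exact (overlap_eq_normSq hP).ge.trans' (Complex.normSq_nonneg _)

theorem continuous_overlap (ψ : Fin d → ℂ) : Continuous (overlap ψ) := by
  unfold overlap
  fun_prop

theorem overlap_self {ψ : Fin d → ℂ} (hψ : ∑ i, Complex.normSq (ψ i) = 1) {Q : OmegaSet d}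
    (hQ : (Q : Matrix (Fin d) (Fin d) ℂ) = vecMulVec ψ (star ψ)) : overlap ψ Q = 1 := by
  rw [overlap_eq_normSq hQ, star_dotProduct_self_eq_one hψ, Complex.normSq_one]

theorem overlap_lt_one {ψ : Fin d → ℂ} (hψ : ∑ i, Complex.normSq (ψ i) = 1) {P Q : OmegaSet d}
    (hQ : (Q : Matrix (Fin d) (Fin d) ℂ) = vecMulVec ψ (star ψ)) (hPQ : P ≠ Q) :
    overlap ψ P < 1 := by
  obtain ⟨φ, hφ, hP⟩ := P.2
  rw [overlap_eq_normSq hP]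
  by_contra! h1
  have hdist := sum_normSq_vecMulVec_sub φ ψ
  rw [star_dotProduct_self_eq_one hφ, star_dotProduct_self_eq_one hψ, star_dotProduct φ ψ,
    Complex.star_def, Complex.mul_conj] at hdist
  have hzero :
      ∑ j, ∑ k, Complex.normSq (vecMulVec φ (star φ) j k - vecMulVec ψ (star ψ) j k) = 0 := by
    refine le_antisymm ?_ (Finset.sum_nonneg fun j _ =>
      Finset.sum_nonneg fun k _ => Complex.normSq_nonneg _)
    have := congrArg Complex.re hdist
    norm_num at this
    linarith
  have hentry (j k : Fin d) : vecMulVec φ (star φ) j k = vecMulVec ψ (star ψ) j k := by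
    have hrow := (Finset.sum_eq_zero_iff_of_nonneg fun j _ =>
      Finset.sum_nonneg fun k _ => Complex.normSq_nonneg _).1 hzero j (Finset.mem_univ j)
    rw [← sub_eq_zero, ← Complex.normSq_eq_zero]
    exact (Finset.sum_eq_zero_iff_of_nonneg fun k _ => Complex.normSq_nonneg _).1 hrow k
      (Finset.mem_univ k)
  exact hPQ (Subtype.ext (hP.trans (Matrix.ext hentry) |>.trans hQ.symm))

theorem integral_mul_overlap_pow_nonneg {μ : Measure (OmegaSet d)} [IsFiniteMeasure μ]
    (f : C(OmegaSet d, ℝ)) {n : ℕ} (hpsd : PosSemidef (of fun F G : Fin n → Fin d =>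
        ∫ P, (f P : ℂ) * ∏ i, (P : Matrix (Fin d) (Fin d) ℂ) (F i) (G i) ∂μ))
    (ψ : Fin d → ℂ) : 0 ≤ ∫ P, f P * overlap ψ P ^ n ∂μ := by
  set w : (Fin n → Fin d) → ℂ := fun G => ∏ i, ψ (G i)
  have hpoint (P : OmegaSet d) :
      star w ⬝ᵥ (of fun F G : Fin n → Fin d =>
          (f P : ℂ) * ∏ i, (P : Matrix (Fin d) (Fin d) ℂ) (F i) (G i)) *ᵥ w =
        ((f P * overlap ψ P ^ n : ℝ) : ℂ) := by
    have hsmul : (of fun F G : Fin n → Fin d =>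
          (f P : ℂ) * ∏ i, (P : Matrix (Fin d) (Fin d) ℂ) (F i) (G i)) =
        (f P : ℂ) • of fun F G : Fin n → Fin d => ∏ i, (P : Matrix (Fin d) (Fin d) ℂ) (F i) (G i) :=
      rfl
    rw [hsmul, smul_mulVec, dotProduct_smul, star_prod_dotProduct_mulVec_prod, ← ofReal_overlap,
      smul_eq_mul]
    norm_cast
  have hmoment := star_dotProduct_integral_mulVec (μ := μ) (fun P (F G : Fin n → Fin d) =>
      (f P : ℂ) * ∏ i, (P : Matrix (Fin d) (Fin d) ℂ) (F i) (G i))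
    (fun F G => Continuous.integrable_of_compactSpace <|
      (Complex.continuous_ofReal.comp f.continuous).mul <| continuous_finsetProd _ fun i _ =>
        (continuous_apply_apply (F i) (G i)).comp continuous_subtype_val) w
  have key : (0 : ℂ) ≤ ((∫ P, f P * overlap ψ P ^ n ∂μ : ℝ) : ℂ) := by
    refine (hpsd.dotProduct_mulVec_nonneg w).trans_eq (hmoment.trans ?_)
    rw [← integral_complex_ofReal]
    exact integral_congr_ae (ae_of_all _ hpoint)
  exact_mod_cast key

end OmegaSet

/-- If `μ` is a Borel probability measure on `Ω(d)` and `f : Ω(d) → ℝ` is continuous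
such that `∫ f(P) P^{⊗n} dμ(P) ≥ 0` (positive semidefinite) for every `n`, then
`f ≥ 0` holds `μ`-almost everywhere. -/
theorem stmt_14 (d : ℕ) (μ : Measure ↥(OmegaSet d)) [IsProbabilityMeasure μ]
    (f : C(↥(OmegaSet d), ℝ))
    (hpsd : ∀ n : ℕ, Matrix.PosSemidef (Matrix.of fun F G : Fin n → Fin d =>
        ∫ P, (f P : ℂ) * ∏ i, (P : Matrix (Fin d) (Fin d) ℂ) (F i) (G i) ∂μ)) :
    ∀ᵐ P ∂μ, 0 ≤ f P := by
  filter_upwards [μ.support_mem_ae] with Q hQ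
  obtain ⟨ψ, hψ, hQψ⟩ := Q.2
  exact nonneg_of_forall_integral_mul_pow_nonneg f (continuous_overlap ψ) (overlap_nonneg ψ)
    (overlap_self hψ hQψ) (fun P hP => overlap_lt_one hψ hQψ hP) hQ
    (fun n => integral_mul_overlap_pow_nonneg f (hpsd n) ψ)
end

section
/- Fix integers $k' > k \ge 1$ and Hermitian matrices $\Phi_I, \Phi_V$ on $\mathbb{C}^n \otimes \mathbb{C}^n$ with $\Phi_V = V \Phi_I$ ($V$ the swap). Define $\Phi_I' = \frac{k(kk'-1)}{k'(k'^2-1)} \Phi_I + \frac{k(k'-k)}{k'(k'^2-1)} \Phi_V$ and $\Phi_V' = V \Phi_I'$. Then $k'^2 \Phi_I' + k' \Phi_V' = k^2 \Phi_I + k \Phi_V$, and moreover $\Phi_I' + \Phi_V' = \frac{k(k+1)}{k'(k'+1)}(\Phi_I + \Phi_V)$ and $\Phi_I' - \Phi_V' = \frac{k(k-1)}{k'(k'-1)}(\Phi_I - \Phi_V)$; in particular, if $\Phi_I \pm \Phi_V \ge 0$ then $\Phi_I' \pm \Phi_V' \ge 0$. -/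
/-! Since `V² = 1`, multiplying `Φ_I' = a Φ_I + b Φ_V` by `V` gives `Φ_V' = a Φ_V + b Φ_I`, so
`Φ_I' ± Φ_V' = (a ± b) (Φ_I ± Φ_V)`. Everything then reduces to identities between rational
functions of `k, k'`: `a ± b = k(k ± 1) / (k'(k' ± 1))`, `k'² a + k' b = k²`, `k'² b + k' a = k`,
and for `k ≥ 1` the factors `k(k ± 1) / (k'(k' ± 1))` are nonnegative. -/
open Matrix ComplexOrder

/-- The swap operator on `ℂ^n ⊗ ℂ^n`, as a matrix. -/
def swapOp (n : ℕ) : Matrix (Fin n × Fin n) (Fin n × Fin n) ℂ :=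
  Matrix.of fun p q => if p.1 = q.2 ∧ p.2 = q.1 then 1 else 0

theorem swapOp_eq_permMatrix (n : ℕ) :
    swapOp n = Equiv.Perm.permMatrix ℂ (Equiv.prodComm (Fin n) (Fin n)) := by
  ext p q
  simp [swapOp, PEquiv.toMatrix_apply, Prod.ext_iff, eq_comm, and_comm]

theorem swapOp_mul_swapOp (n : ℕ) : swapOp n * swapOp n = 1 := by
  have hinvol : (Equiv.prodComm (Fin n) (Fin n) : Equiv.Perm _) * Equiv.prodComm _ _ = 1 :=
    Equiv.ext fun _ => rfl
  rw [swapOp_eq_permMatrix, ← permMatrix_mul, hinvol, permMatrix_one]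

theorem mul_smul_add_smul_mul_of_mul_self_eq_one {R A : Type*} [CommSemiring R] [Semiring A]
    [Algebra R A] {S : A} (hS : S * S = 1) (a b : R) (X : A) :
    S * (a • X + b • (S * X)) = a • (S * X) + b • X := by
  rw [mul_add, mul_smul_comm, mul_smul_comm, ← mul_assoc, hS, one_mul]

section RankCoefficients

variable {K : Type*} [Field K]

/-- The coefficients of `Φ_I` and `Φ_V` in `Φ_I'`, for `k = x` and `k' = y`. -/
def rankCoeffI (x y : K) : K := x * (x * y - 1) / (y * (y ^ 2 - 1))

def rankCoeffV (x y : K) : K := x * (y - x) / (y * (y ^ 2 - 1))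

variable (x : K) {y : K} (hy : y ≠ 0) (hy_sub : y - 1 ≠ 0) (hy_add : y + 1 ≠ 0)
include hy hy_sub hy_add

theorem rankCoeffI_add_rankCoeffV :
    rankCoeffI x y + rankCoeffV x y = x * (x + 1) / (y * (y + 1)) := by
  rw [rankCoeffI, rankCoeffV, show y ^ 2 - 1 = (y - 1) * (y + 1) by ring]
  field_simp
  ring

theorem rankCoeffI_sub_rankCoeffV :
    rankCoeffI x y - rankCoeffV x y = x * (x - 1) / (y * (y - 1)) := by
  rw [rankCoeffI, rankCoeffV, show y ^ 2 - 1 = (y - 1) * (y + 1) by ring]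
  field_simp
  ring

theorem sq_mul_rankCoeffI_add_mul_rankCoeffV :
    y ^ 2 * rankCoeffI x y + y * rankCoeffV x y = x ^ 2 := by
  rw [rankCoeffI, rankCoeffV, show y ^ 2 - 1 = (y - 1) * (y + 1) by ring]
  field_simp
  ring

theorem sq_mul_rankCoeffV_add_mul_rankCoeffI :
    y ^ 2 * rankCoeffV x y + y * rankCoeffI x y = x := by
  rw [rankCoeffI, rankCoeffV, show y ^ 2 - 1 = (y - 1) * (y + 1) by ring]
  field_simp
  ring

end RankCoefficients

theorem stmt_18_general (n k k' : ℕ) (hk : 1 ≤ k) (hkk' : k < k')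
    (ΦI ΦV : Matrix (Fin n × Fin n) (Fin n × Fin n) ℂ)
    (hVdef : ΦV = swapOp n * ΦI) :
    let ΦI' : Matrix (Fin n × Fin n) (Fin n × Fin n) ℂ :=
      (((k : ℂ) * ((k : ℂ) * (k' : ℂ) - 1)) / ((k' : ℂ) * ((k' : ℂ) ^ 2 - 1))) • ΦI +
        (((k : ℂ) * ((k' : ℂ) - (k : ℂ))) / ((k' : ℂ) * ((k' : ℂ) ^ 2 - 1))) • ΦV
    let ΦV' : Matrix (Fin n × Fin n) (Fin n × Fin n) ℂ := swapOp n * ΦI'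
    ((k' : ℂ) ^ 2) • ΦI' + (k' : ℂ) • ΦV' = ((k : ℂ) ^ 2) • ΦI + (k : ℂ) • ΦV ∧
    ΦI' + ΦV' = (((k : ℂ) * ((k : ℂ) + 1)) / ((k' : ℂ) * ((k' : ℂ) + 1))) • (ΦI + ΦV) ∧
    ΦI' - ΦV' = (((k : ℂ) * ((k : ℂ) - 1)) / ((k' : ℂ) * ((k' : ℂ) - 1))) • (ΦI - ΦV) ∧
    ((ΦI + ΦV).PosSemidef → (ΦI' + ΦV').PosSemidef) ∧
    ((ΦI - ΦV).PosSemidef → (ΦI' - ΦV').PosSemidef) := by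
  intro ΦI' ΦV'
  have hk' : (k' : ℂ) ≠ 0 := Nat.cast_ne_zero.2 (by omega)
  have hk'_sub : (k' : ℂ) - 1 ≠ 0 := sub_ne_zero.2 (by exact_mod_cast (by omega : k' ≠ 1))
  have hk'_add : (k' : ℂ) + 1 ≠ 0 := by exact_mod_cast k'.succ_ne_zero
  have hI' : ΦI' = rankCoeffI (k : ℂ) k' • ΦI + rankCoeffV (k : ℂ) k' • ΦV := rfl
  have hV' : ΦV' = rankCoeffI (k : ℂ) k' • ΦV + rankCoeffV (k : ℂ) k' • ΦI := by
    change swapOp n * (_ • ΦI + _ • ΦV) = _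
    rw [hVdef]
    exact mul_smul_add_smul_mul_of_mul_self_eq_one (swapOp_mul_swapOp n) _ _ ΦI
  have h_add :
      ΦI' + ΦV' = (((k : ℂ) * ((k : ℂ) + 1)) / ((k' : ℂ) * ((k' : ℂ) + 1))) • (ΦI + ΦV) := by
    rw [hI', hV', ← rankCoeffI_add_rankCoeffV (k : ℂ) hk' hk'_sub hk'_add]
    module
  have h_sub :
      ΦI' - ΦV' = (((k : ℂ) * ((k : ℂ) - 1)) / ((k' : ℂ) * ((k' : ℂ) - 1))) • (ΦI - ΦV) := by
    rw [hI', hV', ← rankCoeffI_sub_rankCoeffV (k : ℂ) hk' hk'_sub hk'_add]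
    module
  refine ⟨?_, h_add, h_sub, fun h => h_add ▸ h.smul (by positivity), fun h => h_sub ▸ h.smul ?_⟩
  · rw [hI', hV']
    linear_combination (norm := module)
      sq_mul_rankCoeffI_add_mul_rankCoeffV (k : ℂ) hk' hk'_sub hk'_add • ΦI +
      sq_mul_rankCoeffV_add_mul_rankCoeffI (k : ℂ) hk' hk'_sub hk'_add • ΦV
  · have hk_sub_nonneg : (0 : ℂ) ≤ (k : ℂ) - 1 := sub_nonneg.2 (by exact_mod_cast hk)
    have hk'_sub_nonneg : (0 : ℂ) ≤ (k' : ℂ) - 1 := sub_nonneg.2 (by exact_mod_cast (by omega))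
    exact div_nonneg (mul_nonneg (Nat.cast_nonneg k) hk_sub_nonneg)
      (mul_nonneg (Nat.cast_nonneg k') hk'_sub_nonneg)

/-- Monotonicity in the continuous rank parameter for the symmetry-reduced level-2 SDP:
with `Φ_I' = (k(kk'-1))/(k'(k'²-1)) Φ_I + (k(k'-k))/(k'(k'²-1)) Φ_V` and `Φ_V' = V Φ_I'`,
one has `k'²Φ_I' + k'Φ_V' = k²Φ_I + kΦ_V`, the `±` combinations rescale by nonnegative
factors, and positive semidefiniteness of `Φ_I ± Φ_V` is inherited. -/
theorem stmt_18 (n k k' : ℕ) (hk : 1 ≤ k) (hkk' : k < k')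
    (ΦI ΦV : Matrix (Fin n × Fin n) (Fin n × Fin n) ℂ)
    (hI : ΦI.IsHermitian) (hV : ΦV.IsHermitian)
    (hVdef : ΦV = swapOp n * ΦI) :
    let ΦI' : Matrix (Fin n × Fin n) (Fin n × Fin n) ℂ :=
      (((k : ℂ) * ((k : ℂ) * (k' : ℂ) - 1)) / ((k' : ℂ) * ((k' : ℂ) ^ 2 - 1))) • ΦI +
        (((k : ℂ) * ((k' : ℂ) - (k : ℂ))) / ((k' : ℂ) * ((k' : ℂ) ^ 2 - 1))) • ΦV
    let ΦV' : Matrix (Fin n × Fin n) (Fin n × Fin n) ℂ := swapOp n * ΦI'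
    ((k' : ℂ) ^ 2) • ΦI' + (k' : ℂ) • ΦV' = ((k : ℂ) ^ 2) • ΦI + (k : ℂ) • ΦV ∧
    ΦI' + ΦV' = (((k : ℂ) * ((k : ℂ) + 1)) / ((k' : ℂ) * ((k' : ℂ) + 1))) • (ΦI + ΦV) ∧
    ΦI' - ΦV' = (((k : ℂ) * ((k : ℂ) - 1)) / ((k' : ℂ) * ((k' : ℂ) - 1))) • (ΦI - ΦV) ∧
    ((ΦI + ΦV).PosSemidef → (ΦI' + ΦV').PosSemidef) ∧
    ((ΦI - ΦV).PosSemidef → (ΦI' - ΦV').PosSemidef) :=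
  stmt_18_general n k k' hk hkk' ΦI ΦV hVdef
end

section
/- Let $\Phi$ be a positive semidefinite matrix on $(\mathbb{C}^n \otimes \mathbb{C}^n)$ of the form $\Phi = \sum_i p_i\, Q_i \otimes Q_i$, where $p_i > 0$, $\sum_i p_i = 1$, and each $Q_i = |\varphi_i\rangle\langle\varphi_i|$ is a rank-one projection. If additionally $\Phi^{T_1} = \Phi$, where $T_1$ denotes partial transposition on the first tensor factor, then every $Q_i$ is a real matrix, i.e., $Q_i \in \mathbb{R}^{n \times n}$ for all $i$. -/
open Matrix Kronecker ComplexOrder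

/-- If `Φ = ∑ᵢ pᵢ Qᵢ ⊗ Qᵢ` with `pᵢ > 0`, `∑ᵢ pᵢ = 1`, the `Qᵢ = |φᵢ⟩⟨φᵢ|` pairwise
distinct rank-one projections, and `Φ` is invariant under partial transposition on the
first tensor factor, then every `Qᵢ` is a real matrix. -/
theorem stmt_19 (n r : ℕ) (p : Fin r → ℝ) (φ : Fin r → (Fin n → ℂ))
    (hp : ∀ i, 0 < p i) (hsum : ∑ i, p i = 1)
    (hunit : ∀ i, ∑ a, Complex.normSq (φ i a) = 1)
    (hdist : ∀ i j, i ≠ j →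
      vecMulVec (φ i) (star (φ i)) ≠ vecMulVec (φ j) (star (φ j)))
    (hPT : ∀ x y : Fin n × Fin n,
      (∑ i, (p i : ℂ) • (vecMulVec (φ i) (star (φ i)) ⊗ₖ vecMulVec (φ i) (star (φ i))))
          (y.1, x.2) (x.1, y.2)
        = (∑ i, (p i : ℂ) •
            (vecMulVec (φ i) (star (φ i)) ⊗ₖ vecMulVec (φ i) (star (φ i)))) x y) :
    ∀ i a b, (vecMulVec (φ i) (star (φ i)) a b).im = 0 := by
  intro i a b
  have h := hPT (a, b) (b, a)
  simp only [Matrix.sum_apply, Matrix.smul_apply, Matrix.kroneckerMap_apply,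
    Matrix.vecMulVec_apply, Pi.star_apply, smul_eq_mul] at h
  have hre := congrArg Complex.re h
  rw [Complex.re_sum, Complex.re_sum] at hre
  have hsum0 : ∑ j : Fin r, 2 * p j * ((φ j b * star (φ j a)).im)^2 = 0 := by
    have hd := sub_eq_zero.mpr hre.symm
    rw [← Finset.sum_sub_distrib] at hd
    rw [← hd]
    apply Finset.sum_congr rfl
    intro j _
    simp only [Complex.mul_re, Complex.mul_im, RCLike.star_def, Complex.conj_re,
      Complex.conj_im, Complex.ofReal_re, Complex.ofReal_im]
    ring
  have him : (φ i b * star (φ i a)).im = 0 := by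
    have hnn : ∀ j ∈ Finset.univ, 0 ≤ 2 * p j * ((φ j b * star (φ j a)).im)^2 := by
      intro j _
      have := (hp j).le
      positivity
    have := (Finset.sum_eq_zero_iff_of_nonneg hnn).mp hsum0 i (Finset.mem_univ i)
    rcases mul_eq_zero.mp this with h' | h'
    · nlinarith [hp i]
    · exact pow_eq_zero_iff two_ne_zero |>.mp h'
  have hgoal : (φ i a * star (φ i b)) = (starRingEnd ℂ) (φ i b * star (φ i a)) := by
    simp [mul_comm]
  rw [Matrix.vecMulVec_apply, Pi.star_apply, hgoal, Complex.conj_im, him, neg_zero]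
end
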